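/- arXiv:1507.06765 — 3 statements merged into one kernel-verified Lean document; each statement's English description precedes it below -/
import Mathlib

section
/- Let G be a prime P5-free graph that is not a thin spider, and suppose D = {d_1, d_2} is an efficient dominating set of G. Then either deg(d_1) = deg(d_2) = δ(G) and d_1, d_2 are the only vertices of minimum degree in G, or (up to swapping indices) deg(d_1) = δ(G) and d_1 is the only vertex of minimum degree in G. -/
/-
Write `A = N(d₁)` and `B = N(d₂)`: efficiency of `{d₁, d₂}` means `d₁ d₂` is a non-edge and
`V = {d₁, d₂} ⊔ A ⊔ B`. Two non-adjacent vertices `u, v ∈ A` have the same neighbours in `B`,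
for otherwise `v d₁ u x d₂` is an induced `P₅`; so if `A` were not a clique, the vertices of `A`
with the same trace on `B` as `v` would form a homogeneous set. Hence `A` is a clique, and a
vertex `v ∈ A` with `deg v ≤ deg d₁` would be a true twin of `d₁`, making `{d₁, v}` homogeneous.
So every neighbour of `d₁` (and likewise of `d₂`) has larger degree, and a vertex of minimum
degree is `d₁` or `d₂`.
-/

open SimpleGraph

/-- `D` is an efficient dominating set: every vertex is dominated by exactly one vertex of `D`
(a vertex dominates itself and its neighbors). -/
def SimpleGraph.IsEDS {V : Type*} (G : SimpleGraph V) (D : Set V) : Prop :=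
  ∀ v : V, ∃! d, d ∈ D ∧ (d = v ∨ G.Adj d v)

/-- The closed neighborhood of a vertex. -/
def SimpleGraph.closedNbhd {V : Type*} (G : SimpleGraph V) (v : V) : Set V :=
  insert v (G.neighborSet v)

/-- A homogeneous set: at least two vertices, not all of them, and every outside vertex is
adjacent to all or to none of them. -/
def SimpleGraph.IsHomogeneousSet {V : Type*} (G : SimpleGraph V) (H : Set V) : Prop :=
  2 ≤ H.ncard ∧ H ≠ Set.univ ∧
    ∀ v ∉ H, (∀ h ∈ H, G.Adj v h) ∨ (∀ h ∈ H, ¬ G.Adj v h)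

/-- A prime graph: at least two vertices and no homogeneous set. -/
def SimpleGraph.IsPrime {V : Type*} [Fintype V] (G : SimpleGraph V) : Prop :=
  2 ≤ Fintype.card V ∧ ∀ H : Set V, ¬ G.IsHomogeneousSet H

/-- `G` is `P₅`-free: no induced subgraph isomorphic to the path on five vertices. -/
def SimpleGraph.P5Free {V : Type*} (G : SimpleGraph V) : Prop :=
  ¬ Nonempty (SimpleGraph.pathGraph 5 ↪g G)

/-- The graph `2P₂`: the disjoint union of two edges. -/
def twoP2 : SimpleGraph (Fin 4) :=
  SimpleGraph.fromRel (fun a b => (a = 0 ∧ b = 1) ∨ (a = 2 ∧ b = 3))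

/-- `G` is `2P₂`-free: no induced subgraph isomorphic to `2P₂`. -/
def SimpleGraph.TwoP2Free {V : Type*} (G : SimpleGraph V) : Prop :=
  ¬ Nonempty (twoP2 ↪g G)

/-- A thin spider: a split graph with a clique side `C` and independent side `I`,
with a perfect matching between `C` and `I`. -/
def SimpleGraph.IsThinSpider {V : Type*} (G : SimpleGraph V) : Prop :=
  ∃ C I : Set V, Disjoint C I ∧ C ∪ I = Set.univ ∧ G.IsClique C ∧
    (∀ a ∈ I, ∀ b ∈ I, a ≠ b → ¬ G.Adj a b) ∧
    (∀ c ∈ C, ∃! i, i ∈ I ∧ G.Adj c i) ∧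
    (∀ i ∈ I, ∃! c, c ∈ C ∧ G.Adj i c)

namespace SimpleGraph

variable {V : Type*} {G : SimpleGraph V}

theorem nonempty_pathGraph_five_embedding {a b c d e : V}
    (hab : G.Adj a b) (hbc : G.Adj b c) (hcd : G.Adj c d) (hde : G.Adj d e)
    (hac : ¬ G.Adj a c) (had : ¬ G.Adj a d) (hae : ¬ G.Adj a e)
    (hbd : ¬ G.Adj b d) (hbe : ¬ G.Adj b e) (hce : ¬ G.Adj c e) :
    Nonempty (pathGraph 5 ↪g G) := by
  let f : Fin 5 → V := ![a, b, c, d, e]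
  have hf : ∀ i j, G.Adj (f i) (f j) ↔ (pathGraph 5).Adj i j := by
    intro i j
    fin_cases i <;> fin_cases j <;>
      simp [f, pathGraph_adj, hab, hbc, hcd, hde, hab.symm, hbc.symm, hcd.symm, hde.symm,
        hac, had, hae, hbd, hbe, hce, mt G.adj_symm hac, mt G.adj_symm had, mt G.adj_symm hae,
        mt G.adj_symm hbd, mt G.adj_symm hbe, mt G.adj_symm hce]
  -- distinct vertices of `P₅` have distinct neighbourhoods, so `f` is injective
  have htwinFree : ∀ i j : Fin 5,
      (∀ k, (pathGraph 5).Adj i k ↔ (pathGraph 5).Adj j k) → i = j := by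
    simp only [pathGraph_adj]
    decide
  refine ⟨⟨⟨f, fun i j hij => htwinFree i j fun k => ?_⟩, hf _ _⟩⟩
  rw [← hf, ← hf, hij]

theorem isHomogeneousSet_pair {a b c : V} (hab : a ≠ b) (hca : c ≠ a) (hcb : c ≠ b)
    (htwin : ∀ w ∉ ({a, b} : Set V), G.Adj w a ↔ G.Adj w b) :
    G.IsHomogeneousSet {a, b} := by
  refine ⟨(Set.ncard_pair hab).ge, fun h => ?_, fun w hw => ?_⟩
  · rcases (h ▸ Set.mem_univ c : c ∈ ({a, b} : Set V)) with rfl | rfl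
    exacts [hca rfl, hcb rfl]
  · by_cases hwa : G.Adj w a
    · exact Or.inl <| by rintro _ (rfl | rfl) <;> simp_all
    · exact Or.inr <| by rintro _ (rfl | rfl) <;> simp_all

theorem neighborSet_subset_closedNbhd_of_degree_le [Fintype V] [DecidableRel G.Adj] {d v : V}
    (hcl : G.IsClique (G.neighborSet d)) (hv : G.Adj d v) (hle : G.degree v ≤ G.degree d) :
    G.neighborSet v ⊆ G.closedNbhd d := by
  classical
  have hsub : insert d ((G.neighborFinset d).erase v) ⊆ G.neighborFinset v := by
    intro u hu
    simp only [Finset.mem_insert, Finset.mem_erase, mem_neighborFinset] at hu ⊢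
    rcases hu with rfl | ⟨huv, hu⟩
    exacts [hv.symm, hcl hv hu huv.symm]
  have hcard : (G.neighborFinset v).card ≤ (insert d ((G.neighborFinset d).erase v)).card := by
    have hd : d ∉ (G.neighborFinset d).erase v := by simp
    have hpos : 0 < G.degree d := G.degree_pos_iff_exists_adj d |>.2 ⟨v, hv⟩
    rw [Finset.card_insert_of_notMem hd, Finset.card_erase_of_mem (by simpa using hv),
      card_neighborFinset_eq_degree, card_neighborFinset_eq_degree]
    omega
  intro x hx
  have := Finset.eq_of_subset_of_card_le hsub hcard ▸ (G.mem_neighborFinset v x).2 hx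
  simp only [Finset.mem_insert, Finset.mem_erase, mem_neighborFinset] at this
  rcases this with rfl | ⟨-, hx⟩
  exacts [Set.mem_insert _ _, Set.mem_insert_of_mem _ hx]

theorem IsPrime.degree_lt_degree_of_isClique [Fintype V] [DecidableRel G.Adj] {c d v : V}
    (hprime : G.IsPrime) (hcl : G.IsClique (G.neighborSet d)) (hv : G.Adj d v)
    (hcd : c ≠ d) (hcv : c ≠ v) : G.degree d < G.degree v := by
  by_contra! hle
  have hN := neighborSet_subset_closedNbhd_of_degree_le hcl hv hle
  refine hprime.2 _ <|
    isHomogeneousSet_pair hv.ne hcd hcv fun w hw => ⟨fun hwd => ?_, fun hwv => ?_⟩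
  · simp only [Set.mem_insert_iff, Set.mem_singleton_iff, not_or] at hw
    exact hcl hwd.symm hv hw.2
  · rcases hN hwv.symm with rfl | hdw
    exacts [absurd (Set.mem_insert _ _) hw, hdw.symm]

namespace IsEDS

theorem eq_of_dominates {D : Set V} (hD : G.IsEDS D) {d d' v : V} (hd : d ∈ D) (hd' : d' ∈ D)
    (hdv : d = v ∨ G.Adj d v) (hd'v : d' = v ∨ G.Adj d' v) : d = d' :=
  (hD v).unique ⟨hd, hdv⟩ ⟨hd', hd'v⟩

variable {d₁ d₂ : V}

theorem not_adj (hD : G.IsEDS {d₁, d₂}) : ¬ G.Adj d₁ d₂ := fun h =>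
  h.ne (hD.eq_of_dominates (by simp) (by simp) (Or.inl rfl) (Or.inr h.symm))

theorem not_adj_of_adj (hD : G.IsEDS {d₁, d₂}) (hne : d₁ ≠ d₂) {y : V} (h₁ : G.Adj d₁ y) :
    ¬ G.Adj d₂ y := fun h₂ =>
  hne (hD.eq_of_dominates (by simp) (by simp) (Or.inr h₁) (Or.inr h₂))

theorem adj_or_adj (hD : G.IsEDS {d₁, d₂}) {x : V} (h₁ : x ≠ d₁) (h₂ : x ≠ d₂) :
    G.Adj d₁ x ∨ G.Adj d₂ x := by
  obtain ⟨d, ⟨rfl | rfl, rfl | hdx⟩, -⟩ := hD x <;> simp_all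

theorem adj_iff_adj_of_not_adj (hD : G.IsEDS {d₁, d₂}) (hP5 : G.P5Free) (hne : d₁ ≠ d₂)
    {u v x : V} (hu : G.Adj d₁ u) (hv : G.Adj d₁ v) (huv : ¬ G.Adj u v) (hx : G.Adj d₂ x) :
    G.Adj u x ↔ G.Adj v x := by
  have key : ∀ {u v}, G.Adj d₁ u → G.Adj d₁ v → ¬ G.Adj u v → G.Adj u x → G.Adj v x := by
    intro u v hu hv huv hux
    by_contra hvx
    exact hP5 <| nonempty_pathGraph_five_embedding hv.symm hu hux hx.symm (mt G.adj_symm huv)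
      hvx (fun h => hD.not_adj_of_adj hne hv h.symm) (fun h => hD.not_adj_of_adj hne h hx)
      hD.not_adj (fun h => hD.not_adj_of_adj hne hu h.symm)
  exact ⟨key hu hv huv, key hv hu (mt G.adj_symm huv)⟩

theorem isHomogeneousSet_of_not_adj [Finite V] (hD : G.IsEDS {d₁, d₂}) (hP5 : G.P5Free)
    (hne : d₁ ≠ d₂) {u v : V} (hu : G.Adj d₁ u) (hv : G.Adj d₁ v) (huv : u ≠ v)
    (hnuv : ¬ G.Adj u v) :
    G.IsHomogeneousSet {a | G.Adj d₁ a ∧ ∀ x, G.Adj d₂ x → (G.Adj a x ↔ G.Adj v x)} := by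
  set T := {a | G.Adj d₁ a ∧ ∀ x, G.Adj d₂ x → (G.Adj a x ↔ G.Adj v x)}
  have hvT : v ∈ T := ⟨hv, fun _ _ => Iff.rfl⟩
  have huT : u ∈ T := ⟨hu, fun _ hx => hD.adj_iff_adj_of_not_adj hP5 hne hu hv hnuv hx⟩
  refine ⟨?_, fun h => hD.not_adj (h ▸ Set.mem_univ d₂ : d₂ ∈ T).1, fun w hw => ?_⟩
  · calc 2 = ({u, v} : Set V).ncard := (Set.ncard_pair huv).symm
      _ ≤ T.ncard := Set.ncard_le_ncard (Set.insert_subset huT (Set.singleton_subset_iff.2 hvT))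
  rcases eq_or_ne w d₁ with rfl | hw₁
  · exact Or.inl fun t ht => ht.1
  rcases eq_or_ne w d₂ with rfl | hw₂
  · exact Or.inr fun t ht hwt => hD.not_adj_of_adj hne ht.1 hwt
  rcases hD.adj_or_adj hw₁ hw₂ with hw' | hw'
  · -- a non-neighbour `t ∈ T` of `w` would share its trace on `N(d₂)`, putting `w` in `T`
    refine Or.inl fun t ht => by_contra fun hwt => hw ⟨hw', fun x hx => ?_⟩
    exact (hD.adj_iff_adj_of_not_adj hP5 hne hw' ht.1 hwt hx).trans (ht.2 x hx)
  · by_cases hvw : G.Adj v w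
    · exact Or.inl fun t ht => ((ht.2 w hw').2 hvw).symm
    · exact Or.inr fun t ht hwt => hvw ((ht.2 w hw').1 hwt.symm)

theorem isClique_neighborSet [Fintype V] (hD : G.IsEDS {d₁, d₂}) (hprime : G.IsPrime)
    (hP5 : G.P5Free) (hne : d₁ ≠ d₂) : G.IsClique (G.neighborSet d₁) :=
  fun _ hu _ hv huv => by_contra fun h =>
    hprime.2 _ (hD.isHomogeneousSet_of_not_adj hP5 hne hu hv huv h)

theorem degree_lt_degree_of_adj [Fintype V] [DecidableRel G.Adj] (hD : G.IsEDS {d₁, d₂})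
    (hprime : G.IsPrime) (hP5 : G.P5Free) (hne : d₁ ≠ d₂) {v : V} (hv : G.Adj d₁ v) :
    G.degree d₁ < G.degree v :=
  hprime.degree_lt_degree_of_isClique (hD.isClique_neighborSet hprime hP5 hne) hv hne.symm
    fun h => hD.not_adj (h ▸ hv)

theorem eq_or_eq_of_degree_eq_minDegree [Fintype V] [DecidableRel G.Adj]
    (hD : G.IsEDS {d₁, d₂}) (hprime : G.IsPrime) (hP5 : G.P5Free) (hne : d₁ ≠ d₂) {v : V}
    (hv : G.degree v = G.minDegree) : v = d₁ ∨ v = d₂ := by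
  by_contra! ⟨h₁, h₂⟩
  have hD' : G.IsEDS {d₂, d₁} := Set.pair_comm d₁ d₂ ▸ hD
  rcases hD.adj_or_adj h₁ h₂ with h | h
  · have := hD.degree_lt_degree_of_adj hprime hP5 hne h
    have := G.minDegree_le_degree d₁
    omega
  · have := hD'.degree_lt_degree_of_adj hprime hP5 hne.symm h
    have := G.minDegree_le_degree d₂
    omega

end IsEDS

end SimpleGraph

theorem stmt_9_general {V : Type*} [Fintype V] (G : SimpleGraph V) [DecidableRel G.Adj]
    (hprime : G.IsPrime) (hP5 : G.P5Free)
    (d₁ d₂ : V) (hne : d₁ ≠ d₂) (hD : G.IsEDS {d₁, d₂}) :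
    (G.degree d₁ = G.minDegree ∧ G.degree d₂ = G.minDegree ∧
        ∀ v : V, G.degree v = G.minDegree → v = d₁ ∨ v = d₂) ∨
      (G.degree d₁ = G.minDegree ∧ ∀ v : V, G.degree v = G.minDegree → v = d₁) ∨
      (G.degree d₂ = G.minDegree ∧ ∀ v : V, G.degree v = G.minDegree → v = d₂) := by
  have hmin v (hv : G.degree v = G.minDegree) : v = d₁ ∨ v = d₂ :=
    hD.eq_or_eq_of_degree_eq_minDegree hprime hP5 hne hv
  have : Nonempty V := ⟨d₁⟩
  obtain ⟨w, hw⟩ := G.exists_minimal_degree_vertex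
  by_cases h₁ : G.degree d₁ = G.minDegree <;> by_cases h₂ : G.degree d₂ = G.minDegree
  · exact Or.inl ⟨h₁, h₂, hmin⟩
  · refine Or.inr (Or.inl ⟨h₁, fun v hv => (hmin v hv).resolve_right ?_⟩)
    rintro rfl
    exact h₂ hv
  · refine Or.inr (Or.inr ⟨h₂, fun v hv => (hmin v hv).resolve_left ?_⟩)
    rintro rfl
    exact h₁ hv
  · rcases hmin w hw.symm with rfl | rfl
    exacts [(h₁ hw.symm).elim, (h₂ hw.symm).elim]

theorem stmt_9 {V : Type*} [Fintype V] [Nonempty V] (G : SimpleGraph V) [DecidableRel G.Adj]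
    (hprime : G.IsPrime) (hP5 : G.P5Free) (hns : ¬ G.IsThinSpider)
    (d₁ d₂ : V) (hne : d₁ ≠ d₂) (hD : G.IsEDS {d₁, d₂}) :
    (G.degree d₁ = G.minDegree ∧ G.degree d₂ = G.minDegree ∧
        ∀ v : V, G.degree v = G.minDegree → v = d₁ ∨ v = d₂) ∨
      (G.degree d₁ = G.minDegree ∧ ∀ v : V, G.degree v = G.minDegree → v = d₁) ∨
      (G.degree d₂ = G.minDegree ∧ ∀ v : V, G.degree v = G.minDegree → v = d₂) :=
  stmt_9_general G hprime hP5 d₁ d₂ hne hD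
end

section
/- Let G be a prime P5-free graph which is not 2P2-free. If D is an efficient dominating set of G with |D| = 2, say D = {d_1, d_2}, then N(d_1) and N(d_2) are cliques, V = N[d_1] ∪ N[d_2] with N[d_1] ∩ N[d_2] = ∅, and every vertex of N(d_1) has a neighbor in N(d_2) and vice versa. -/
open SimpleGraph

/-!
Efficiency of `{d₁, d₂}` says exactly that the closed neighbourhoods `N[d₁]` and `N[d₂]` partition
the vertex set. If a vertex `z ∈ N(d₂)` saw exactly one of two non-adjacent vertices `a, b ∈ N(d₁)`,
then `d₂ z a d₁ b` would be an induced `P₅`. Hence no vertex outside `N(d₁)` splits a non-edge of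
`N(d₁)`, so the co-connected component of any non-edge of `N(d₁)` would be a homogeneous set;
primality therefore forces `N(d₁)` to be a clique. Finally, a vertex `x ∈ N(d₁)` with no neighbour
in `N(d₂)` would satisfy `N[x] = N[d₁]`, and `{x, d₁}` would be a homogeneous set.
-/

namespace SimpleGraph

variable {V : Type*} {G : SimpleGraph V}

@[simp]
theorem mem_closedNbhd {u v : V} : v ∈ G.closedNbhd u ↔ v = u ∨ G.Adj u v := Iff.rfl

theorem self_mem_closedNbhd (u : V) : u ∈ G.closedNbhd u := Or.inl rfl

theorem mem_closedNbhd_of_adj {u v : V} (h : G.Adj u v) : v ∈ G.closedNbhd u := Or.inr h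

theorem IsEDS.union_closedNbhd_eq_univ {d₁ d₂ : V} (hD : G.IsEDS {d₁, d₂}) :
    G.closedNbhd d₁ ∪ G.closedNbhd d₂ = Set.univ := by
  refine Set.eq_univ_of_forall fun v => ?_
  obtain ⟨d, ⟨hd, hdv⟩, -⟩ := hD v
  rcases hd with rfl | rfl
  · exact Or.inl (hdv.imp Eq.symm id)
  · exact Or.inr (hdv.imp Eq.symm id)

theorem IsEDS.disjoint_closedNbhd {d₁ d₂ : V} (hne : d₁ ≠ d₂) (hD : G.IsEDS {d₁, d₂}) :
    Disjoint (G.closedNbhd d₁) (G.closedNbhd d₂) := by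
  refine Set.disjoint_left.2 fun v h₁ h₂ => hne ?_
  obtain ⟨d, -, hd⟩ := hD v
  exact (hd d₁ ⟨Or.inl rfl, h₁.imp Eq.symm id⟩).trans
    (hd d₂ ⟨Or.inr rfl, h₂.imp Eq.symm id⟩).symm

theorem P5Free.false_of_isInducedPath (hP5 : G.P5Free) {a b c d e : V}
    (hab : G.Adj a b) (hbc : G.Adj b c) (hcd : G.Adj c d) (hde : G.Adj d e)
    (hac : ¬G.Adj a c) (had : ¬G.Adj a d) (hae : ¬G.Adj a e)
    (hbd : ¬G.Adj b d) (hbe : ¬G.Adj b e) (hce : ¬G.Adj c e) : False := by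
  refine hP5 ⟨⟨⟨![a, b, c, d, e], fun i j hij => ?_⟩, fun {i j} => ?_⟩⟩
  · fin_cases i <;> fin_cases j <;> simp at hij ⊢ <;> subst hij <;> grind [G.adj_symm]
  · change G.Adj (![a, b, c, d, e] i) (![a, b, c, d, e] j) ↔ _
    fin_cases i <;> fin_cases j <;> simp [pathGraph_adj, G.adj_comm] <;> assumption

theorem not_adj_of_mem_closedNbhd {d₁ d₂ v : V}
    (hdisj : Disjoint (G.closedNbhd d₁) (G.closedNbhd d₂)) (hv : v ∈ G.closedNbhd d₁) :
    ¬G.Adj d₂ v :=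
  fun h => hdisj.notMem_of_mem_left hv (mem_closedNbhd_of_adj h)

theorem P5Free.adj_iff_adj_of_not_adj (hP5 : G.P5Free) {d₁ d₂ z a b : V}
    (hdisj : Disjoint (G.closedNbhd d₁) (G.closedNbhd d₂))
    (hz : G.Adj d₂ z) (ha : G.Adj d₁ a) (hb : G.Adj d₁ b) (hab : ¬G.Adj a b) :
    G.Adj z a ↔ G.Adj z b := by
  have split_free : ∀ {a b : V}, G.Adj d₁ a → G.Adj d₁ b → ¬G.Adj a b →
      G.Adj z a → G.Adj z b := by
    intro a b ha hb hab hza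
    by_contra hzb
    have outside {v : V} : v ∈ G.closedNbhd d₁ → ¬G.Adj d₂ v := not_adj_of_mem_closedNbhd hdisj
    exact hP5.false_of_isInducedPath hz hza ha.symm hb (outside (mem_closedNbhd_of_adj ha))
      (outside (self_mem_closedNbhd d₁)) (outside (mem_closedNbhd_of_adj hb))
      (fun h => outside (mem_closedNbhd_of_adj h.symm) hz) hzb hab
  exact ⟨split_free ha hb hab, split_free hb ha fun h => hab h.symm⟩

theorem IsPrime.isClique_of_forall_adj_iff [Fintype V] (hG : G.IsPrime) {S : Set V} {w : V}
    (hw : w ∉ S)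
    (hS : ∀ v ∉ S, ∀ a ∈ S, ∀ b ∈ S, ¬G.Adj a b → (G.Adj v a ↔ G.Adj v b)) :
    G.IsClique S := by
  intro x hx y hy hxy
  by_contra hnxy
  let R : V → V → Prop := fun a b => a ∈ S ∧ b ∈ S ∧ ¬G.Adj a b
  -- the co-component of `x` inside `S`
  let A : Set V := {v | Relation.ReflTransGen R x v}
  have hAS : ∀ {a}, a ∈ A → a ∈ S := by
    intro a ha
    cases ha with
    | refl => exact hx
    | tail _ hstep => exact hstep.2.1
  have hyA : y ∈ A := Relation.ReflTransGen.single ⟨hx, hy, hnxy⟩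
  refine hG.2 A ⟨?_, fun hA => hw (hAS (hA ▸ Set.mem_univ w)), fun v hv => ?_⟩
  · calc 2 = ({x, y} : Set V).ncard := (Set.ncard_pair hxy).symm
      _ ≤ A.ncard := Set.ncard_le_ncard (Set.pair_subset Relation.ReflTransGen.refl hyA)
  by_cases hvS : v ∈ S
  · refine Or.inl fun a ha => ?_
    by_contra hva
    exact hv (Relation.ReflTransGen.tail ha ⟨hAS ha, hvS, fun h => hva h.symm⟩)
  · have hconst : ∀ a ∈ A, (G.Adj v a ↔ G.Adj v x) := by
      intro a ha
      induction ha with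
      | refl => exact Iff.rfl
      | tail _ hstep ih => exact (hS v hvS _ hstep.1 _ hstep.2.1 hstep.2.2).symm.trans ih
    by_cases hvx : G.Adj v x
    · exact Or.inl fun a ha => (hconst a ha).2 hvx
    · exact Or.inr fun a ha h => hvx ((hconst a ha).1 h)

theorem IsPrime.eq_of_closedNbhd_eq [Fintype V] (hG : G.IsPrime) {x y w : V}
    (hwx : w ≠ x) (hwy : w ≠ y) (h : G.closedNbhd x = G.closedNbhd y) : x = y := by
  by_contra hxy
  refine hG.2 {x, y} ⟨(Set.ncard_pair hxy).ge, fun hu => ?_, fun v hv => ?_⟩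
  · have hw : w ∈ ({x, y} : Set V) := hu ▸ Set.mem_univ w
    rcases hw with hw | hw
    exacts [hwx hw, hwy hw]
  simp only [Set.mem_insert_iff, Set.mem_singleton_iff, not_or] at hv
  have hxy_adj : G.Adj v x ↔ G.Adj v y := by
    have := Set.ext_iff.1 h v
    simpa [hv.1, hv.2, G.adj_comm] using this
  by_cases hvx : G.Adj v x
  · exact Or.inl (by rintro _ (rfl | rfl) <;> simp_all)
  · exact Or.inr (by rintro _ (rfl | rfl) <;> simp_all)

theorem IsPrime.isClique_neighborSet [Fintype V] (hG : G.IsPrime) (hP5 : G.P5Free) {d₁ d₂ : V}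
    (hcover : G.closedNbhd d₁ ∪ G.closedNbhd d₂ = Set.univ)
    (hdisj : Disjoint (G.closedNbhd d₁) (G.closedNbhd d₂)) :
    G.IsClique (G.neighborSet d₁) := by
  refine hG.isClique_of_forall_adj_iff G.notMem_neighborSet_self fun v hv a ha b hb hab => ?_
  rcases hcover ▸ Set.mem_univ v with (rfl | hv₁) | (rfl | hv₂)
  · exact iff_of_true ha hb
  · exact absurd hv₁ hv
  · exact iff_of_false (not_adj_of_mem_closedNbhd hdisj (mem_closedNbhd_of_adj ha))
      (not_adj_of_mem_closedNbhd hdisj (mem_closedNbhd_of_adj hb))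
  · exact hP5.adj_iff_adj_of_not_adj hdisj hv₂ ha hb hab

theorem IsPrime.exists_adj_neighborSet [Fintype V] (hG : G.IsPrime) {d₁ d₂ x : V}
    (hcover : G.closedNbhd d₁ ∪ G.closedNbhd d₂ = Set.univ)
    (hdisj : Disjoint (G.closedNbhd d₁) (G.closedNbhd d₂))
    (hclique : G.IsClique (G.neighborSet d₁)) (hx : G.Adj d₁ x) :
    ∃ y ∈ G.neighborSet d₂, G.Adj x y := by
  by_contra! hno
  have hx₁ : x ∈ G.closedNbhd d₁ := mem_closedNbhd_of_adj hx
  have hd₂d₁ : d₂ ≠ d₁ := (hdisj.ne_of_mem (self_mem_closedNbhd d₁) (self_mem_closedNbhd d₂)).symm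
  have hd₂x : d₂ ≠ x := (hdisj.ne_of_mem hx₁ (self_mem_closedNbhd d₂)).symm
  -- `x` and `d₁` are true twins
  refine hx.ne (hG.eq_of_closedNbhd_eq hd₂d₁ hd₂x (Set.ext fun v => ?_))
  rcases hcover ▸ Set.mem_univ v with hv | hv
  · refine iff_of_true hv ?_
    rcases hv with rfl | hv
    · exact mem_closedNbhd_of_adj hx.symm
    · by_cases hvx : v = x
      · exact hvx ▸ self_mem_closedNbhd v
      · exact mem_closedNbhd_of_adj (hclique hx hv (Ne.symm hvx))
  · refine iff_of_false (hdisj.notMem_of_mem_right hv) ?_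
    rintro (rfl | hxv)
    · exact hdisj.notMem_of_mem_right hv hx₁
    · rcases hv with rfl | hv
      exacts [not_adj_of_mem_closedNbhd hdisj hx₁ hxv.symm, hno v hv hxv]

end SimpleGraph

theorem stmt_10_general {V : Type*} [Fintype V] (G : SimpleGraph V) (hprime : G.IsPrime)
    (hP5 : G.P5Free)
    (d₁ d₂ : V) (hne : d₁ ≠ d₂) (hD : G.IsEDS {d₁, d₂}) :
    G.IsClique (G.neighborSet d₁) ∧ G.IsClique (G.neighborSet d₂) ∧
      G.closedNbhd d₁ ∪ G.closedNbhd d₂ = Set.univ ∧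
      Disjoint (G.closedNbhd d₁) (G.closedNbhd d₂) ∧
      (∀ x ∈ G.neighborSet d₁, ∃ y ∈ G.neighborSet d₂, G.Adj x y) ∧
      (∀ y ∈ G.neighborSet d₂, ∃ x ∈ G.neighborSet d₁, G.Adj y x) := by
  have hcover := hD.union_closedNbhd_eq_univ
  have hdisj := hD.disjoint_closedNbhd hne
  have hcover' : G.closedNbhd d₂ ∪ G.closedNbhd d₁ = Set.univ := Set.union_comm _ _ ▸ hcover
  have hclique₁ := hprime.isClique_neighborSet hP5 hcover hdisj
  have hclique₂ := hprime.isClique_neighborSet hP5 hcover' hdisj.symm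
  exact ⟨hclique₁, hclique₂, hcover, hdisj,
    fun x hx => hprime.exists_adj_neighborSet hcover hdisj hclique₁ hx,
    fun y hy => hprime.exists_adj_neighborSet hcover' hdisj.symm hclique₂ hy⟩

theorem stmt_10 {V : Type*} [Fintype V] (G : SimpleGraph V) (hprime : G.IsPrime)
    (hP5 : G.P5Free) (h2P2 : ¬ G.TwoP2Free)
    (d₁ d₂ : V) (hne : d₁ ≠ d₂) (hD : G.IsEDS {d₁, d₂}) :
    G.IsClique (G.neighborSet d₁) ∧ G.IsClique (G.neighborSet d₂) ∧
      G.closedNbhd d₁ ∪ G.closedNbhd d₂ = Set.univ ∧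
      Disjoint (G.closedNbhd d₁) (G.closedNbhd d₂) ∧
      (∀ x ∈ G.neighborSet d₁, ∃ y ∈ G.neighborSet d₂, G.Adj x y) ∧
      (∀ y ∈ G.neighborSet d₂, ∃ x ∈ G.neighborSet d₁, G.Adj y x) :=
  stmt_10_general G hprime hP5 d₁ d₂ hne hD
end

section
/- If a prime P5-free graph G has an efficient dominating set with at least three vertices, then G is a thin spider (in particular, G is 2P2-free). -/
open SimpleGraph

/-!
Write `N(d)` for the neighbourhood of `d ∈ D`: these sets are pairwise disjoint, cover `V \ D`,
and `D` is independent. Excluding induced `P₅`s such as `d - x - y - z - e`, with `d, e ∈ D`,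
forces in turn: each `N(d)` is a clique (a co-component of `N(d)` would be homogeneous); any two
classes are joined by an edge (primality makes `G` connected); and a vertex outside `D ∪ N(d)` is
adjacent to all or none of `N(d)`, which needs a third class. Then `N(d)` is homogeneous, hence a
single vertex `x_d`, and the `x_d` form a clique matched to `D`.
-/

theorem Set.exists_mem_ne_ne_of_two_lt_ncard {α : Type*} {s : Set α} (hs : 2 < s.ncard)
    (a b : α) : ∃ c ∈ s, c ≠ a ∧ c ≠ b := by
  have h : 1 < (s \ {a}).ncard := by
    have := Set.pred_ncard_le_ncard_sdiff_singleton s a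
    omega
  obtain ⟨c, ⟨hcs, hca⟩, hcb⟩ := Set.exists_ne_of_one_lt_ncard h b
  exact ⟨c, hcs, hca, hcb⟩

namespace SimpleGraph

variable {V : Type*} {G : SimpleGraph V}

def IsModule (G : SimpleGraph V) (S : Set V) : Prop :=
  ∀ v ∉ S, (∀ h ∈ S, G.Adj v h) ∨ ∀ h ∈ S, ¬ G.Adj v h

theorem IsPrime.subsingleton_of_isModule [Fintype V] (hG : G.IsPrime) {S : Set V}
    (hS : G.IsModule S) (hne : S ≠ Set.univ) : S.Subsingleton := by
  by_contra hsub
  have := Set.one_lt_ncard_iff_nontrivial.2 (Set.not_subsingleton_iff.1 hsub)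
  exact hG.2 S ⟨this, hne, hS⟩

theorem IsPrime.eq_univ_of_adj_closed [Fintype V] (hG : G.IsPrime) (hV : 3 ≤ Fintype.card V)
    {S : Set V} {u : V} (hu : u ∈ S) (hS : ∀ a ∈ S, ∀ b, G.Adj a b → b ∈ S) : S = Set.univ := by
  by_contra hne
  have hSu : S = {u} :=
    (hG.subsingleton_of_isModule (fun v hv => .inr fun h hh hvh => hv (hS h hh v hvh.symm))
      hne).eq_singleton_of_mem hu
  have hiso : ∀ v, ¬ G.Adj u v := fun v huv => huv.ne (hSu ▸ hS u hu v huv).symm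
  have hsub : ({u}ᶜ : Set V).Subsingleton := by
    refine hG.subsingleton_of_isModule (fun v hv => .inr fun h _ => ?_) (by simp)
    rw [Set.notMem_compl_iff, Set.mem_singleton_iff] at hv
    exact hv ▸ hiso h
  have := Set.ncard_add_ncard_compl {u}
  rw [Set.ncard_singleton, Nat.card_eq_fintype_card] at this
  have := Set.ncard_le_one_iff_subsingleton.2 hsub
  omega

theorem IsPrime.exists_adj [Fintype V] (hG : G.IsPrime) (hV : 3 ≤ Fintype.card V) (u : V) :
    ∃ v, G.Adj u v := by
  by_contra! hiso
  have hu := congrArg Set.ncard <| hG.eq_univ_of_adj_closed hV (Set.mem_singleton u)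
    fun a ha b hab => absurd (ha ▸ hab) (hiso b)
  rw [Set.ncard_singleton, Set.ncard_univ, Nat.card_eq_fintype_card] at hu
  omega

theorem P5Free.false_of_inducedPath (hG : G.P5Free) {a b c d e : V}
    (hab : G.Adj a b) (hbc : G.Adj b c) (hcd : G.Adj c d) (hde : G.Adj d e)
    (hac : ¬ G.Adj a c) (had : ¬ G.Adj a d) (hae : ¬ G.Adj a e)
    (hbd : ¬ G.Adj b d) (hbe : ¬ G.Adj b e) (hce : ¬ G.Adj c e) : False := by
  have hinj : Function.Injective ![a, b, c, d, e] := by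
    intro i j hij
    fin_cases i <;> fin_cases j <;> simp_all [G.adj_comm]
  refine hG ⟨⟨⟨![a, b, c, d, e], hinj⟩, ?_⟩⟩
  intro i j
  fin_cases i <;> fin_cases j <;> simp_all [G.adj_comm, pathGraph_adj]

theorem IsThinSpider.twoP2Free (h : G.IsThinSpider) : G.TwoP2Free := by
  rintro ⟨e⟩
  obtain ⟨C, I, -, hCI, hC, hI, -, -⟩ := h
  have hedge : ∀ i j, twoP2.Adj i j → e i ∈ C ∨ e j ∈ C := by
    intro i j hij
    by_contra! hn
    have hmemI : ∀ v, v ∉ C → v ∈ I := fun v hv => (hCI ▸ Set.mem_univ v).resolve_left hv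
    exact hI _ (hmemI _ hn.1) _ (hmemI _ hn.2) (e.injective.ne hij.ne) (e.map_adj_iff.2 hij)
  have hfar : ∀ i j, ¬ twoP2.Adj i j → i ≠ j → e i ∈ C → e j ∈ C → False :=
    fun i j hn hne hi hj => hn (e.map_adj_iff.1 (hC hi hj (e.injective.ne hne)))
  rcases hedge 0 1 (by simp [twoP2]) with h0 | h0 <;>
    rcases hedge 2 3 (by simp [twoP2]) with h2 | h2 <;>
    exact hfar _ _ (by simp [twoP2]) (by decide) h0 h2

namespace IsEDS

variable {D : Set V} (hD : G.IsEDS D)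

/-- The class `N(d)` of `d ∈ D` is the fibre `{v ∉ D | hD.dom v = d}`. -/
noncomputable def dom (v : V) : V := (hD v).exists.choose

theorem dom_mem (v : V) : hD.dom v ∈ D := (hD v).exists.choose_spec.1

theorem eq_dom {d v : V} (hd : d ∈ D) (h : d = v ∨ G.Adj d v) : d = hD.dom v :=
  (hD v).unique ⟨hd, h⟩ (hD v).exists.choose_spec

theorem dom_eq_self {v : V} (hv : v ∈ D) : hD.dom v = v := (hD.eq_dom hv (.inl rfl)).symm

theorem dom_eq_of_adj {d v : V} (hd : d ∈ D) (h : G.Adj d v) : hD.dom v = d :=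
  (hD.eq_dom hd (.inr h)).symm

theorem not_adj_of_dom_ne {d v : V} (hd : d ∈ D) (hne : hD.dom v ≠ d) : ¬ G.Adj d v :=
  fun h => hne (hD.dom_eq_of_adj hd h)

theorem not_dom_adj_of_dom_ne {v w : V} (hne : hD.dom v ≠ hD.dom w) : ¬ G.Adj (hD.dom w) v :=
  hD.not_adj_of_dom_ne (hD.dom_mem w) hne

theorem not_adj_dom_of_dom_ne {v w : V} (hne : hD.dom v ≠ hD.dom w) : ¬ G.Adj v (hD.dom w) :=
  fun h => hD.not_dom_adj_of_dom_ne hne h.symm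

theorem not_adj_of_mem (hD : G.IsEDS D) {d e : V} (hd : d ∈ D) (he : e ∈ D) : ¬ G.Adj d e :=
  fun h => h.ne (by rw [← hD.dom_eq_self he, hD.dom_eq_of_adj hd h])

theorem adj_dom {v : V} (hv : v ∉ D) : G.Adj (hD.dom v) v :=
  ((hD v).exists.choose_spec.2).resolve_left fun h => hv (h ▸ hD.dom_mem v)

theorem adj_of_adj_of_adj (hP5 : G.P5Free) {x y z : V} (hx : x ∉ D) (hz : z ∉ D)
    (hxy : hD.dom x ≠ hD.dom y) (hyz : hD.dom y ≠ hD.dom z) (hxz : hD.dom x ≠ hD.dom z)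
    (h₁ : G.Adj x y) (h₂ : G.Adj y z) : G.Adj x z := by
  by_contra hn
  exact hP5.false_of_inducedPath (hD.adj_dom hx) h₁ h₂ (hD.adj_dom hz).symm
    (hD.not_dom_adj_of_dom_ne hxy.symm) (hD.not_dom_adj_of_dom_ne hxz.symm)
    (hD.not_adj_of_mem (hD.dom_mem x) (hD.dom_mem z)) hn
    (hD.not_adj_dom_of_dom_ne hxz) (hD.not_adj_dom_of_dom_ne hyz)

theorem adj_of_adj_of_not_adj (hP5 : G.P5Free) {a b w : V} (ha : a ∉ D) (hb : b ∉ D)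
    (hw : w ∉ D) (hab : hD.dom a = hD.dom b) (hwa : hD.dom w ≠ hD.dom a) (hnab : ¬ G.Adj a b)
    (h : G.Adj w a) : G.Adj w b := by
  by_contra hn
  exact hP5.false_of_inducedPath (hD.adj_dom hw) h (hD.adj_dom ha).symm (hab ▸ hD.adj_dom hb)
    (hD.not_dom_adj_of_dom_ne hwa.symm) (hD.not_adj_of_mem (hD.dom_mem w) (hD.dom_mem a))
    (hD.not_dom_adj_of_dom_ne (hab ▸ hwa.symm)) (hD.not_adj_dom_of_dom_ne hwa) hn hnab

theorem adj_of_dom_eq [Fintype V] (hG : G.IsPrime) (hP5 : G.P5Free) {x y : V} (hx : x ∉ D)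
    (hy : y ∉ D) (hxy : hD.dom x = hD.dom y) (hne : x ≠ y) : G.Adj x y := by
  by_contra hnxy
  -- `S` is the co-connected component of `x` inside its class
  let R : V → V → Prop := fun p q => q ∉ D ∧ hD.dom q = hD.dom x ∧ ¬ G.Adj p q
  let S : Set V := {z | Relation.ReflTransGen R x z}
  have hS : ∀ z ∈ S, z ∉ D ∧ hD.dom z = hD.dom x := by
    intro z hz
    induction hz with
    | refl => exact ⟨hx, rfl⟩
    | tail _ hbc _ => exact ⟨hbc.1, hbc.2.1⟩
  have hconst : ∀ v ∉ D, hD.dom v ≠ hD.dom x → ∀ z ∈ S, (G.Adj v z ↔ G.Adj v x) := by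
    intro v hv hvx z hz
    induction hz with
    | refl => rfl
    | @tail b c hb hbc ih =>
      obtain ⟨hbD, hbx⟩ := hS b hb
      rw [← ih]
      exact ⟨hD.adj_of_adj_of_not_adj hP5 hbc.1 hbD hv (hbc.2.1.trans hbx.symm)
          (hbc.2.1 ▸ hvx) fun h => hbc.2.2 h.symm,
        hD.adj_of_adj_of_not_adj hP5 hbD hbc.1 hv (hbx.trans hbc.2.1.symm) (hbx ▸ hvx) hbc.2.2⟩
  have hmod : G.IsModule S := by
    intro v hv
    by_cases hvD : v ∈ D
    · by_cases hvx : v = hD.dom x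
      · exact .inl fun z hz => hvx ▸ (hS z hz).2 ▸ hD.adj_dom (hS z hz).1
      · exact .inr fun z hz => hD.not_adj_of_dom_ne hvD ((hS z hz).2 ▸ Ne.symm hvx)
    by_cases hvx : hD.dom v = hD.dom x
    · exact .inl fun z hz => by_contra fun h => hv (hz.tail ⟨hvD, hvx, fun h' => h h'.symm⟩)
    by_cases hvx' : G.Adj v x
    · exact .inl fun z hz => (hconst v hvD hvx z hz).2 hvx'
    · exact .inr fun z hz h => hvx' ((hconst v hvD hvx z hz).1 h)
  have hSD : S ≠ Set.univ := fun h =>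
    (hS (hD.dom x) (h ▸ Set.mem_univ _)).1 (hD.dom_mem x)
  exact hne (hG.subsingleton_of_isModule hmod hSD .refl (.single ⟨hy, hxy.symm, hnxy⟩))

theorem exists_adj_dom_ne [Fintype V] (hG : G.IsPrime) (hP5 : G.P5Free) (hD2 : D.Nontrivial)
    {x : V} (hx : x ∉ D) : ∃ z ∉ D, hD.dom z ≠ hD.dom x ∧ G.Adj x z := by
  by_contra! hno
  let S : Set V := insert (hD.dom x)
    {z | z ∉ D ∧ hD.dom z = hD.dom x ∧ ∀ w ∉ D, G.Adj z w → hD.dom w = hD.dom x}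
  have hxS : x ∈ S := .inr ⟨hx, rfl, fun w hw hxw => by_contra fun h => hno w hw h hxw⟩
  have hmod : G.IsModule S := by
    intro v hv
    have hvx : v ≠ hD.dom x := fun h => hv (.inl h)
    by_cases hvD : v ∈ D
    · refine .inr ?_
      rintro z (rfl | ⟨-, hzx, -⟩)
      · exact hD.not_adj_of_mem hvD (hD.dom_mem x)
      · exact hD.not_adj_of_dom_ne hvD (hzx ▸ hvx.symm)
    by_cases hvx' : hD.dom v = hD.dom x
    · refine .inl ?_
      rintro z (rfl | ⟨hz, hzx, hzo⟩)
      · exact hvx' ▸ (hD.adj_dom hvD).symm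
      · exact hD.adj_of_dom_eq hG hP5 hvD hz (hvx'.trans hzx.symm)
          fun h => hv (h ▸ .inr ⟨hz, hzx, hzo⟩)
    · refine .inr ?_
      rintro z (rfl | ⟨-, -, hzo⟩) h
      · exact hD.not_adj_dom_of_dom_ne hvx' h
      · exact hvx' (hzo v hvD h.symm)
  obtain ⟨e, he, hex⟩ := hD2.exists_ne (hD.dom x)
  have hSD : S ≠ Set.univ := fun h => by
    rcases (h ▸ Set.mem_univ e : e ∈ S) with h | h
    exacts [hex h, h.1 he]
  exact hx (hG.subsingleton_of_isModule hmod hSD hxS (.inl rfl) ▸ hD.dom_mem x)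

theorem dom_eq_of_adj_of_not_adj [Fintype V] (hG : G.IsPrime) (hP5 : G.P5Free)
    {u₁ u₂ t z : V} (hu₁ : u₁ ∉ D) (hu₂ : u₂ ∉ D) (ht : t ∉ D) (hz : z ∉ D)
    (hu : hD.dom u₁ = hD.dom u₂) (ht₁ : G.Adj t u₁) (ht₂ : ¬ G.Adj t u₂) (hz₂ : G.Adj u₂ z)
    (htu : hD.dom t ≠ hD.dom u₁) (hzu : hD.dom z ≠ hD.dom u₁) : hD.dom z = hD.dom t := by
  by_contra hzt
  have hu₁₂ : G.Adj u₁ u₂ := hD.adj_of_dom_eq hG hP5 hu₁ hu₂ hu fun h => ht₂ (h ▸ ht₁)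
  by_cases hz₁ : G.Adj z u₁
  · have htz := hD.adj_of_adj_of_adj hP5 ht hz htu hzu.symm (Ne.symm hzt) ht₁ hz₁.symm
    exact ht₂ (hD.adj_of_adj_of_adj hP5 ht hu₂ (Ne.symm hzt) (hu ▸ hzu) (hu ▸ htu) htz hz₂.symm)
  by_cases hzt' : G.Adj z t
  · exact hz₁ (hD.adj_of_adj_of_adj hP5 hz hu₁ hzt htu hzu hzt' ht₁)
  exact hP5.false_of_inducedPath hz₂.symm hu₁₂.symm ht₁.symm (hD.adj_dom ht).symm
    hz₁ hzt' (hD.not_adj_dom_of_dom_ne hzt) (fun h => ht₂ h.symm)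
    (hD.not_adj_dom_of_dom_ne (hu ▸ htu.symm)) (hD.not_adj_dom_of_dom_ne htu.symm)

def Linked (d e : V) : Prop :=
  ∃ p q, p ∉ D ∧ q ∉ D ∧ hD.dom p = d ∧ hD.dom q = e ∧ G.Adj p q

theorem Linked.trans [Fintype V] (hG : G.IsPrime) (hP5 : G.P5Free) {d e c : V}
    (hde : hD.Linked d e) (hec : hD.Linked e c) (hdc : d ≠ c) : hD.Linked d c := by
  obtain ⟨p, q, hp, hq, rfl, rfl, hpq⟩ := hde
  obtain ⟨q', r, hq', hr, hqq', rfl, hq'r⟩ := hec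
  by_cases hpq_dom : hD.dom p = hD.dom q
  · exact hpq_dom ▸ ⟨q', r, hq', hr, hqq', rfl, hq'r⟩
  by_cases hqr_dom : hD.dom q = hD.dom r
  · exact hqr_dom ▸ ⟨p, q, hp, hq, rfl, rfl, hpq⟩
  refine ⟨p, r, hp, hr, rfl, rfl, by_contra fun hpr => ?_⟩
  have hpqr : ¬ G.Adj q r := fun h =>
    hpr (hD.adj_of_adj_of_adj hP5 hp hr hpq_dom hqr_dom hdc hpq h)
  have hqq'_ne : q ≠ q' := by rintro rfl; exact hpqr hq'r
  have hpq' : ¬ G.Adj p q' := fun h =>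
    hpr (hD.adj_of_adj_of_adj hP5 hp hr (hqq' ▸ hpq_dom) (hqq' ▸ hqr_dom) hdc h hq'r)
  exact hP5.false_of_inducedPath hpq (hD.adj_of_dom_eq hG hP5 hq hq' hqq'.symm hqq'_ne) hq'r
    (hD.adj_dom hr).symm hpq' hpr (hD.not_adj_dom_of_dom_ne hdc) hpqr
    (hD.not_adj_dom_of_dom_ne hqr_dom) (hD.not_adj_dom_of_dom_ne (hqq' ▸ hqr_dom))

theorem linked_of_ne [Fintype V] (hG : G.IsPrime) (hP5 : G.P5Free) (hV : 3 ≤ Fintype.card V)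
    {d e : V} (hd : d ∈ D) (he : e ∈ D) (hne : d ≠ e) : hD.Linked d e := by
  let S : Set V := {v | hD.dom v = d ∨ hD.Linked d (hD.dom v)}
  have hclosed : ∀ u ∈ S, ∀ v, G.Adj u v → v ∈ S := by
    intro u hu v huv
    by_cases huv_dom : hD.dom v = hD.dom u
    · rwa [Set.mem_ofPred_eq, huv_dom]
    have hu' : u ∉ D := fun h =>
      huv_dom ((hD.dom_eq_of_adj h huv).trans (hD.dom_eq_self h).symm)
    have hv' : v ∉ D := fun h =>
      huv_dom ((hD.dom_eq_self h).trans (hD.dom_eq_of_adj h huv.symm).symm)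
    have hlink : hD.Linked (hD.dom u) (hD.dom v) := ⟨u, v, hu', hv', rfl, rfl, huv⟩
    rcases hu with hu | hu
    · exact .inr (hu ▸ hlink)
    by_cases hvd : hD.dom v = d
    · exact .inl hvd
    · exact .inr (Linked.trans hD hG hP5 hu hlink (Ne.symm hvd))
  have heS : e ∈ S := hG.eq_univ_of_adj_closed hV (.inl (hD.dom_eq_self hd)) hclosed ▸
    Set.mem_univ e
  rw [Set.mem_ofPred_eq, hD.dom_eq_self he] at heS
  exact heS.resolve_left hne.symm

theorem adj_of_adj_of_not_adj_of_adj [Fintype V] (hG : G.IsPrime) (hP5 : G.P5Free)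
    {p a q w : V} (hp : p ∉ D) (ha : a ∉ D) (hq : q ∉ D) (hw : w ∉ D)
    (hpa : hD.dom p = hD.dom a) (hpq : G.Adj p q) (hqa : ¬ G.Adj q a) (haw : G.Adj a w)
    (hqp : hD.dom q ≠ hD.dom p) (hwp : hD.dom w ≠ hD.dom p) (hqw : hD.dom q ≠ hD.dom w) :
    G.Adj p w := by
  have hpa' : G.Adj p a := hD.adj_of_dom_eq hG hP5 hp ha hpa (by rintro rfl; exact hqa hpq.symm)
  have hqw' : ¬ G.Adj q w := fun h =>
    hqa (hD.adj_of_adj_of_adj hP5 hq ha hqw (hpa ▸ hwp) (hpa ▸ hqp) h haw.symm)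
  by_contra hpw
  exact hP5.false_of_inducedPath hpq.symm hpa' haw (hD.adj_dom hw).symm hqa hqw'
    (hD.not_adj_dom_of_dom_ne hqw) hpw (hD.not_adj_dom_of_dom_ne hwp.symm)
    (hD.not_adj_dom_of_dom_ne (hpa ▸ hwp.symm))

theorem adj_of_adj_of_dom_eq [Fintype V] (hG : G.IsPrime) (hP5 : G.P5Free) (hD3 : 2 < D.ncard)
    {u₁ u₂ w : V} (hu₁ : u₁ ∉ D) (hu₂ : u₂ ∉ D) (hw : w ∉ D) (hu : hD.dom u₁ = hD.dom u₂)
    (hwu : hD.dom w ≠ hD.dom u₁) (hw₁ : G.Adj w u₁) : G.Adj w u₂ := by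
  by_contra hw₂
  have hV : 3 ≤ Fintype.card V := hD3.trans_le (D.ncard_le_card.trans_eq Nat.card_eq_fintype_card)
  obtain ⟨z, hz, hzu₂, hz₂⟩ :=
    hD.exists_adj_dom_ne hG hP5 (Set.one_lt_ncard_iff_nontrivial.1 (by omega)) hu₂
  have hzu₁ : hD.dom z ≠ hD.dom u₁ := hu ▸ hzu₂
  have hzw := hD.dom_eq_of_adj_of_not_adj hG hP5 hu₁ hu₂ hw hz hu hw₁ hw₂ hz₂ hwu hzu₁
  obtain ⟨c, hc, hcu, hcw⟩ := Set.exists_mem_ne_ne_of_two_lt_ncard hD3 (hD.dom u₁) (hD.dom w)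
  obtain ⟨p, q, hp, hq, hpu, rfl, hpq⟩ :=
    hD.linked_of_ne hG hP5 hV (hD.dom_mem u₁) hc hcu.symm
  -- the distinguisher `w` forces every other-class neighbour of `u₂` into the class of `w`
  have hq₂ : ¬ G.Adj q u₂ := fun h =>
    hcw (hD.dom_eq_of_adj_of_not_adj hG hP5 hu₁ hu₂ hw hq hu hw₁ hw₂ h.symm hwu hcu)
  have hpz := hD.adj_of_adj_of_not_adj_of_adj hG hP5 hp hu₂ hq hz (hpu.trans hu) hpq hq₂ hz₂
    (hpu ▸ hcu) (hpu ▸ hzu₁) (hzw ▸ hcw)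
  have hqz := hD.adj_of_adj_of_adj hP5 hq hz (hpu ▸ hcu) (hpu ▸ hzu₁.symm) (hzw ▸ hcw)
    hpq.symm hpz
  exact hq₂ (hD.adj_of_adj_of_adj hP5 hq hu₂ (hzw ▸ hcw) hzu₂ (hu ▸ hcu) hqz hz₂.symm)

theorem eq_of_dom_eq [Fintype V] (hG : G.IsPrime) (hP5 : G.P5Free) (hD3 : 2 < D.ncard)
    {x y : V} (hx : x ∉ D) (hy : y ∉ D) (hxy : hD.dom x = hD.dom y) : x = y := by
  let S : Set V := {z | z ∉ D ∧ hD.dom z = hD.dom x}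
  have hmod : G.IsModule S := by
    intro v hv
    by_cases hvD : v ∈ D
    · by_cases hvx : v = hD.dom x
      · exact .inl fun z ⟨hz, hzx⟩ => hvx ▸ hzx ▸ hD.adj_dom hz
      · exact .inr fun z ⟨_, hzx⟩ => hD.not_adj_of_dom_ne hvD (hzx ▸ Ne.symm hvx)
    by_cases hex : ∃ z₀ ∈ S, G.Adj v z₀
    · obtain ⟨z₀, ⟨hz₀, hz₀x⟩, hvz₀⟩ := hex
      exact .inl fun z ⟨hz, hzx⟩ => hD.adj_of_adj_of_dom_eq hG hP5 hD3 hz₀ hz hvD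
        (hz₀x.trans hzx.symm) (fun h => hv ⟨hvD, h.trans hz₀x⟩) hvz₀
    · exact .inr fun z hz h => hex ⟨z, hz, h⟩
  have hSD : S ≠ Set.univ := fun h => (h ▸ Set.mem_univ (hD.dom x) : hD.dom x ∈ S).1 (hD.dom_mem x)
  exact hG.subsingleton_of_isModule hmod hSD ⟨hx, rfl⟩ ⟨hy, hxy.symm⟩

theorem isThinSpider [Fintype V] (hD : G.IsEDS D) (hG : G.IsPrime) (hP5 : G.P5Free)
    (hD3 : 2 < D.ncard) : G.IsThinSpider := by
  have hV : 3 ≤ Fintype.card V := hD3.trans_le (D.ncard_le_card.trans_eq Nat.card_eq_fintype_card)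
  refine ⟨Dᶜ, D, disjoint_compl_left, Set.compl_union_self D, ?_, ?_, ?_, ?_⟩
  · intro x hx y hy hne
    obtain ⟨p, q, hp, hq, hpx, hqy, hpq⟩ := hD.linked_of_ne hG hP5 hV (hD.dom_mem x)
      (hD.dom_mem y) fun h => hne (hD.eq_of_dom_eq hG hP5 hD3 hx hy h)
    rwa [hD.eq_of_dom_eq hG hP5 hD3 hp hx hpx, hD.eq_of_dom_eq hG hP5 hD3 hq hy hqy] at hpq
  · exact fun a ha b hb _ => hD.not_adj_of_mem ha hb
  · exact fun c hc => ⟨hD.dom c, ⟨hD.dom_mem c, (hD.adj_dom hc).symm⟩,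
      fun i ⟨hi, hci⟩ => (hD.dom_eq_of_adj hi hci.symm).symm⟩
  · intro i hi
    obtain ⟨c, hic⟩ := hG.exists_adj hV i
    have hc : c ∉ D := fun hc => hD.not_adj_of_mem hi hc hic
    refine ⟨c, ⟨hc, hic⟩, fun c' ⟨hc', hic'⟩ => hD.eq_of_dom_eq hG hP5 hD3 hc' hc ?_⟩
    rw [hD.dom_eq_of_adj hi hic, hD.dom_eq_of_adj hi hic']

end IsEDS
end SimpleGraph

theorem stmt_18 {V : Type*} [Fintype V] (G : SimpleGraph V) (hprime : G.IsPrime)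
    (hP5 : G.P5Free) (D : Set V) (hD : G.IsEDS D) (hcard : 3 ≤ D.ncard) :
    G.IsThinSpider ∧ G.TwoP2Free := by
  have h := hD.isThinSpider hprime hP5 hcard
  exact ⟨h, h.twoP2Free⟩
end
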